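/- Let F be the swap unitary on ℂ²⊗ℂ², F(u⊗v) = v⊗u, and let |Φ⁺⟩ = (|00⟩+|11⟩)/√2. Consider the four-qubit pure state obtained from |Φ⁺⟩^{AA'}⊗|Φ⁺⟩^{BB'} by applying F to the pair of subsystems (A, B). Then the reduced density matrix of this state on the subsystems AA' (tracing out BB') equals (1/4)·I₄; equivalently, the resulting state is maximally entangled of Schmidt rank 4 across the bipartition AA'|BB', so its entanglement entropy across that cut equals 2 ebits (this is the entangling power computation showing swap can generate two ebits). -/

import Mathlib

/-! After the swap, the state is `½ ∑ |a a'⟩|a' a⟩`, i.e. `c ∑ᵢ |i⟩|e i⟩` for the bijection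
`e = Equiv.prodComm`. The reduced density matrix of any such state is `|c|² • 1`, and a Hermitian
matrix equal to `c • 1` has every eigenvalue equal to `c`, so the entropy is `log₂ 4`. -/

open Matrix Complex
open scoped Matrix

noncomputable section

/-- Reduced density matrix of a bipartite pure state (tracing out the second factor). -/
def redDM {m n : Type*} [Fintype n] (η : m × n → ℂ) : Matrix m m ℂ :=
  Matrix.of fun i i' => ∑ j, η (i, j) * star (η (i', j))

theorem redDM_isHermitian {m n : Type*} [Fintype n] (η : m × n → ℂ) :
    (redDM η).IsHermitian := by
  ext i j
  simp only [redDM, Matrix.conjTranspose_apply, Matrix.of_apply, star_sum, star_mul',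
    star_star]
  exact Finset.sum_congr rfl fun x _ => mul_comm _ _

/-- The entanglement entropy (in base 2) of a bipartite pure state: the von Neumann
entropy of its reduced density matrix, with the convention 0·log₂0 = 0. -/
def entEntropy {m n : Type*} [Fintype m] [Fintype n] [DecidableEq m] (η : m × n → ℂ) : ℝ :=
  -∑ i, (redDM_isHermitian η).eigenvalues i *
      Real.logb 2 ((redDM_isHermitian η).eigenvalues i)

/-- The swap unitary F on ℂ²⊗ℂ², F(u⊗v) = v⊗u. -/
def swapF : Matrix (Fin 2 × Fin 2) (Fin 2 × Fin 2) ℂ :=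
  Matrix.of fun x y => if x.1 = y.2 ∧ x.2 = y.1 then 1 else 0

/-- The ebit |Φ⁺⟩ = (|00⟩+|11⟩)/√2. -/
def ebit : Fin 2 × Fin 2 → ℂ := fun x => if x.1 = x.2 then (Real.sqrt 2 : ℂ)⁻¹ else 0

/-- The swap F applied to the subsystems (A,B) of the four-qubit system AA'BB',
as an operator on vectors indexed by ((A,A'),(B,B')). -/
def swapAB :
    Matrix ((Fin 2 × Fin 2) × (Fin 2 × Fin 2)) ((Fin 2 × Fin 2) × (Fin 2 × Fin 2)) ℂ :=
  Matrix.of fun x y =>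
    swapF (x.1.1, x.2.1) (y.1.1, y.2.1) * (if x.1.2 = y.1.2 then 1 else 0) *
      (if x.2.2 = y.2.2 then 1 else 0)


theorem Matrix.IsHermitian.eigenvalues_eq_of_eq_smul_one {𝕜 n : Type*} [RCLike 𝕜] [Fintype n]
    [DecidableEq n] {A : Matrix n n 𝕜} (hA : A.IsHermitian) {c : ℝ} (h : A = (c : 𝕜) • 1)
    (i : n) : hA.eigenvalues i = c := by
  have : Nonempty n := ⟨i⟩
  have hspec : spectrum ℝ A = {c} := by
    rw [h, ← RCLike.real_smul_eq_coe_smul, ← Algebra.algebraMap_eq_smul_one, spectrum.scalar_eq]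
  simpa [hspec] using hA.eigenvalues_mem_spectrum_real i

theorem entEntropy_eq_logb_card {m n : Type*} [Fintype m] [Fintype n] [DecidableEq m]
    {η : m × n → ℂ} (h : redDM η = (Fintype.card m : ℂ)⁻¹ • 1) :
    entEntropy η = Real.logb 2 (Fintype.card m) := by
  have heig := (redDM_isHermitian η).eigenvalues_eq_of_eq_smul_one (c := (Fintype.card m)⁻¹)
    (by rw [h]; push_cast; rfl)
  simp only [entEntropy, heig, Finset.sum_const, Finset.card_univ, nsmul_eq_mul, Real.logb_inv]
  rcases Nat.eq_zero_or_pos (Fintype.card m) with h0 | hpos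
  · simp [h0]
  · field_simp

theorem redDM_ite_eq_equiv {m n : Type*} [Fintype n] [DecidableEq m] [DecidableEq n]
    (e : m ≃ n) (c : ℂ) :
    redDM (fun x : m × n => if x.2 = e x.1 then c else 0) = (c * star c) • 1 := by
  ext i i'
  by_cases hii : i = i' <;> simp [redDM, hii]

theorem swapAB_mulVec_apply (ψ : (Fin 2 × Fin 2) × (Fin 2 × Fin 2) → ℂ) (a a' b b' : Fin 2) :
    (swapAB *ᵥ ψ) ((a, a'), (b, b')) = ψ ((b, a'), (a, b')) := by
  simp only [Matrix.mulVec, dotProduct, swapAB, swapF, Matrix.of_apply]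
  rw [Fintype.sum_eq_single ((b, a'), (a, b'))]
  · simp
  · rintro ⟨⟨c, c'⟩, d, d'⟩ hne
    split_ifs <;> simp_all

theorem ebit_mul_ebit (a b c d : Fin 2) :
    ebit (a, b) * ebit (c, d) = if a = b ∧ c = d then 1 / 2 else 0 := by
  have hsqrt : ((Real.sqrt 2 : ℂ))⁻¹ * ((Real.sqrt 2 : ℂ))⁻¹ = 1 / 2 := by
    rw [← mul_inv, ← Complex.ofReal_mul, Real.mul_self_sqrt zero_le_two]
    norm_num
  unfold ebit
  split_ifs <;> simp_all

theorem swapAB_mulVec_ebit_ebit :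
    (swapAB *ᵥ fun x => ebit x.1 * ebit x.2) =
      fun x => if x.2 = Equiv.prodComm _ _ x.1 then 1 / 2 else 0 := by
  funext ⟨⟨a, a'⟩, b, b'⟩
  rw [swapAB_mulVec_apply, ebit_mul_ebit]
  simp only [Equiv.prodComm_apply, Prod.swap_prod_mk, Prod.mk.injEq, eq_comm (a := b')]

/-- The entangling-power computation for swap: applying F to subsystems (A,B) of
|Φ⁺⟩^{AA'}⊗|Φ⁺⟩^{BB'} yields a state whose reduced density matrix on AA' is (1/4)·I₄,
i.e. a maximally entangled state of Schmidt rank 4 across AA'|BB', of entanglement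
entropy 2 ebits. -/
theorem swap_generates_two_ebits :
    redDM (swapAB.mulVec fun x => ebit x.1 * ebit x.2) =
        (1 / 4 : ℂ) • (1 : Matrix (Fin 2 × Fin 2) (Fin 2 × Fin 2) ℂ) ∧
      entEntropy (swapAB.mulVec fun x => ebit x.1 * ebit x.2) = 2 := by
  have hred : redDM (swapAB.mulVec fun x => ebit x.1 * ebit x.2) =
      (1 / 4 : ℂ) • (1 : Matrix (Fin 2 × Fin 2) (Fin 2 × Fin 2) ℂ) := by
    rw [swapAB_mulVec_ebit_ebit, redDM_ite_eq_equiv]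
    norm_num
  refine ⟨hred, ?_⟩
  rw [entEntropy_eq_logb_card (by rw [hred]; norm_num)]
  simp only [Fintype.card_prod, Fintype.card_fin]
  rw [show ((2 * 2 : ℕ) : ℝ) = 2 ^ 2 by norm_num, Real.logb_pow, Real.logb_self_eq_one one_lt_two]
  norm_num

end
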